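/- arXiv:math/0306063 — 2 statements merged into one kernel-verified Lean document; each statement's English description precedes it below -/
import Mathlib

section
/- Let A, F, B, G, H, K, C be matrices of sizes n×n, q×q, n×m, q×p, m×q, m×p, p×n respectively over ℂ, and let s ∈ ℂ be such that sIₙ - A and sI_q - F are invertible. Then det( s·diag(Iₙ, I_q) - [[A + BKC, BH],[GC, F]] ) = det(sIₙ - A)·det(sI_q - F)·det( [[I_p, C(sIₙ-A)⁻¹B],[H(sI_q-F)⁻¹G + K, I_m]] ). -/
/-!
Taking the Schur complement of the block `sI - F` reduces the left side to
`det(sI - F) · det(sI - A - B L C)` with `L = H (sI - F)⁻¹ G + K`. The Weinstein–Aronszajn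
identity turns `det(sI - A - B L C)` into `det(sI - A) · det(I - L C (sI - A)⁻¹ B)`, and the last
factor is the Schur complement of the identity block of `[[I, C (sI - A)⁻¹ B], [L, I]]`.
-/

open Matrix

namespace Matrix

variable {R : Type*} [CommRing R] {ι μ ν : Type*} [Fintype ι] [DecidableEq ι] [Fintype μ]
  [Fintype ν]

theorem det_sub_mul_mul_of_isUnit_det [DecidableEq μ] {S : Matrix ι ι R} (hS : IsUnit S.det)
    (B : Matrix ι μ R) (L : Matrix μ ν R) (C : Matrix ν ι R) :
    (S - B * L * C).det = S.det * (1 - L * (C * S⁻¹ * B)).det := by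
  have hBLC : S - B * L * C = S + B * (-(L * C)) := by
    rw [Matrix.mul_neg, ← Matrix.mul_assoc, ← sub_eq_add_neg]
  rw [hBLC, det_add_mul B _ hS]
  simp only [Matrix.neg_mul, Matrix.mul_assoc, ← sub_eq_add_neg]

theorem det_fromBlocks_feedback_of_isUnit {κ : Type*} [Fintype κ] [DecidableEq κ]
    {T : Matrix κ κ R} (hT : IsUnit T) (S : Matrix ι ι R) (B : Matrix ι μ R) (C : Matrix ν ι R)
    (G : Matrix κ ν R) (H : Matrix μ κ R) (K : Matrix μ ν R) :
    (fromBlocks (S - B * K * C) (-(B * H)) (-(G * C)) T).det =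
      T.det * (S - B * (H * T⁻¹ * G + K) * C).det := by
  have := hT.invertible
  rw [det_fromBlocks₂₂, invOf_eq_nonsing_inv]
  congr 2
  simp only [Matrix.mul_add, Matrix.add_mul, Matrix.neg_mul, Matrix.mul_neg, neg_neg,
    Matrix.mul_assoc]
  abel

end Matrix

/-- The closed-loop characteristic determinant identity:
`det(s·I_{n+q} - [[A + BKC, BH],[GC, F]]) =
 det(sIₙ - A)·det(sI_q - F)·det([[I_p, C(sIₙ-A)⁻¹B],[H(sI_q-F)⁻¹G + K, I_m]])`,
for `s` such that `sIₙ - A` and `sI_q - F` are invertible. -/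
theorem closed_loop_determinant_identity {n m p q : ℕ}
    (A : Matrix (Fin n) (Fin n) ℂ) (B : Matrix (Fin n) (Fin m) ℂ)
    (C : Matrix (Fin p) (Fin n) ℂ)
    (F : Matrix (Fin q) (Fin q) ℂ) (G : Matrix (Fin q) (Fin p) ℂ)
    (H : Matrix (Fin m) (Fin q) ℂ) (K : Matrix (Fin m) (Fin p) ℂ)
    (s : ℂ)
    (hA : IsUnit (s • (1 : Matrix (Fin n) (Fin n) ℂ) - A))
    (hF : IsUnit (s • (1 : Matrix (Fin q) (Fin q) ℂ) - F)) :
    (Matrix.fromBlocks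
        (s • (1 : Matrix (Fin n) (Fin n) ℂ) - (A + B * K * C)) (-(B * H))
        (-(G * C)) (s • (1 : Matrix (Fin q) (Fin q) ℂ) - F)).det =
    (s • (1 : Matrix (Fin n) (Fin n) ℂ) - A).det *
    (s • (1 : Matrix (Fin q) (Fin q) ℂ) - F).det *
    (Matrix.fromBlocks
        (1 : Matrix (Fin p) (Fin p) ℂ)
        (C * (s • (1 : Matrix (Fin n) (Fin n) ℂ) - A)⁻¹ * B)
        (H * (s • (1 : Matrix (Fin q) (Fin q) ℂ) - F)⁻¹ * G + K)
        (1 : Matrix (Fin m) (Fin m) ℂ)).det := by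
  rw [← sub_sub, det_fromBlocks_feedback_of_isUnit hF,
    det_sub_mul_mul_of_isUnit_det ((isUnit_iff_isUnit_det _).mp hA), det_fromBlocks_one₁₁]
  ring
end

section
/- With notation as in the closed-loop determinant identity, for s not an eigenvalue of A nor of F: det( sI_{n+q} - [[A + BKC, BH],[GC, F]] ) = 0 if and only if det( [[I_p, C(sIₙ-A)⁻¹B],[H(sI_q-F)⁻¹G + K, I_m]] ) = 0. -/
/-!
Taking the Schur complement of the invertible block `sI - F` turns the closed-loop determinant
into `det(sI - F) · det(sI - A - B L C)` with `L = H(sI - F)⁻¹G + K`. Factoring out `sI - A` and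
applying Sylvester's identity `det(1 - XY) = det(1 - YX)` gives
`det(sI - F) · det(sI - A) · det(1 - L C (sI - A)⁻¹ B)`, and the last factor is the Schur complement
of the identity block in the geometric matrix.
-/

open Matrix

namespace Matrix

variable {R : Type*} [CommRing R] {n m p q : Type*}
  [Fintype n] [Fintype m] [Fintype p] [Fintype q]
  [DecidableEq n] [DecidableEq q]

theorem det_sub_mul_mul [DecidableEq m] (S : Matrix n n R) [Invertible S] (B : Matrix n m R)
    (L : Matrix m p R) (C : Matrix p n R) :
    (S - B * L * C).det = S.det * (1 - L * (C * S⁻¹ * B)).det := by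
  have factor : S - B * L * C = S * (1 - (S⁻¹ * B) * (L * C)) := by
    rw [Matrix.mul_sub, Matrix.mul_one, ← Matrix.mul_assoc, ← Matrix.mul_assoc,
      ← Matrix.mul_assoc, mul_inv_of_invertible, Matrix.one_mul]
  rw [factor, det_mul, det_one_sub_mul_comm]
  simp only [Matrix.mul_assoc]

theorem det_fromBlocks_sub_mul_mul (S : Matrix n n R) (T : Matrix q q R) [Invertible T]
    (B : Matrix n m R) (C : Matrix p n R) (G : Matrix q p R) (H : Matrix m q R)
    (K : Matrix m p R) :
    (fromBlocks (S - B * K * C) (-(B * H)) (-(G * C)) T).det =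
      T.det * (S - B * (H * T⁻¹ * G + K) * C).det := by
  rw [det_fromBlocks₂₂, invOf_eq_nonsing_inv]
  congr 2
  simp only [Matrix.neg_mul, Matrix.mul_neg, neg_neg, Matrix.mul_add, Matrix.add_mul,
    Matrix.mul_assoc]
  abel

end Matrix

/-- For `s` not an eigenvalue of `A` nor of `F`, the closed-loop pole
condition `det(sI_{n+q} - [[A + BKC, BH],[GC, F]]) = 0` holds iff the geometric
condition `det([[I_p, C(sIₙ-A)⁻¹B],[H(sI_q-F)⁻¹G + K, I_m]]) = 0` holds. -/
theorem closed_loop_pole_iff_geometric {n m p q : ℕ}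
    (A : Matrix (Fin n) (Fin n) ℂ) (B : Matrix (Fin n) (Fin m) ℂ)
    (C : Matrix (Fin p) (Fin n) ℂ)
    (F : Matrix (Fin q) (Fin q) ℂ) (G : Matrix (Fin q) (Fin p) ℂ)
    (H : Matrix (Fin m) (Fin q) ℂ) (K : Matrix (Fin m) (Fin p) ℂ)
    (s : ℂ)
    (hA : IsUnit (s • (1 : Matrix (Fin n) (Fin n) ℂ) - A))
    (hF : IsUnit (s • (1 : Matrix (Fin q) (Fin q) ℂ) - F)) :
    (Matrix.fromBlocks
        (s • (1 : Matrix (Fin n) (Fin n) ℂ) - (A + B * K * C)) (-(B * H))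
        (-(G * C)) (s • (1 : Matrix (Fin q) (Fin q) ℂ) - F)).det = 0 ↔
    (Matrix.fromBlocks
        (1 : Matrix (Fin p) (Fin p) ℂ)
        (C * (s • (1 : Matrix (Fin n) (Fin n) ℂ) - A)⁻¹ * B)
        (H * (s • (1 : Matrix (Fin q) (Fin q) ℂ) - F)⁻¹ * G + K)
        (1 : Matrix (Fin m) (Fin m) ℂ)).det = 0 := by
  have := hA.invertible
  have := hF.invertible
  have hdetA := ((isUnit_iff_isUnit_det _).mp hA).ne_zero
  have hdetF := ((isUnit_iff_isUnit_det _).mp hF).ne_zero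
  rw [← sub_sub, det_fromBlocks_sub_mul_mul, det_sub_mul_mul, det_fromBlocks_one₁₁]
  simp only [mul_eq_zero, hdetA, hdetF, false_or]
end
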